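/- arXiv:2508.08057 — 3 statements merged into one kernel-verified Lean document; each statement's English description precedes it below -/
import Mathlib

section
/- Let (A_{f,k}, ·, [·,·,·]) be a transposed Poisson structure on A_{f,k}. Then L_i·L_j = 0 for all i,j ∈ ℤ, and there exists α ∈ ℂ with L_i·M_j = α f(M_j) L_i for all i,j ∈ ℤ. -/
/-- The underlying space of `A_{f,k}`: formal ℂ-linear combinations of basis
elements indexed by `Bool × ℤ` (`(false, r)` is `L_r`, `(true, r)` is `M_r`). -/
abbrev Afk : Type := (Bool × ℤ) →₀ ℂ

/-- Basis element `L_r`. -/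
noncomputable def Lb (r : ℤ) : Afk := Finsupp.single (false, r) 1
/-- Basis element `M_r`. -/
noncomputable def Mb (r : ℤ) : Afk := Finsupp.single (true, r) 1

/-- The linear functional `f` determined by its values `F t := f(M_t)` on the `M_t`
(and `f(L_r) = 0`), applied to basis indices. -/
noncomputable def fval (F : ℤ → ℂ) : Bool × ℤ → ℂ
  | (false, _) => 0
  | (true, t) => F t

/-- Structure constants of `A_{f,k}`: the alternating trilinear extension of
`[L_r,L_s,M_t] = f(M_t)(r-s) L_{r+s+k}`, all other brackets of basis elements zero. -/
noncomputable def scf (F : ℤ → ℂ) (k : ℤ) : Bool × ℤ → Bool × ℤ → Bool × ℤ → Afk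
  | (false, r), (false, s), (true, t) => (F t * ((r - s : ℤ) : ℂ)) • Lb (r + s + k)
  | (false, r), (true, s), (false, t) => (F s * ((t - r : ℤ) : ℂ)) • Lb (r + t + k)
  | (true, r), (false, s), (false, t) => (F r * ((s - t : ℤ) : ℂ)) • Lb (s + t + k)
  | _, _, _ => 0

/-- The 3-Lie bracket of `A_{f,k}`, extended trilinearly from the structure
constants. -/
noncomputable def br (F : ℤ → ℂ) (k : ℤ) (x y z : Afk) : Afk :=
  x.sum fun a ca => y.sum fun b cb => z.sum fun c cc => (ca * cb * cc) • scf F k a b c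

section Aux

variable (F : ℤ → ℂ) (k : ℤ)

lemma scf_true (a b c : Bool × ℤ) (j : ℤ) : scf F k a b c (true, j) = 0 := by
  rcases a with ⟨_|_, ra⟩ <;> rcases b with ⟨_|_, rb⟩ <;> rcases c with ⟨_|_, rc⟩ <;>
    simp [scf, Lb, Finsupp.single_apply]

lemma br_apply (x y z : Afk) (p : Bool × ℤ) :
    br F k x y z p =
      x.sum fun a ca => y.sum fun b cb => z.sum fun c cc => (ca * cb * cc) * scf F k a b c p := by
  simp [br, Finsupp.sum_apply, Finsupp.smul_apply, smul_eq_mul]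

lemma br_true (x y z : Afk) (j : ℤ) : br F k x y z (true, j) = 0 := by
  rw [br_apply]
  refine Finset.sum_eq_zero fun a _ => Finset.sum_eq_zero fun b _ =>
    Finset.sum_eq_zero fun c _ => ?_
  simp [scf_true]

lemma br_LLM (r s t : ℤ) :
    br F k (Lb r) (Lb s) (Mb t) = (F t * ((r - s : ℤ) : ℂ)) • Lb (r + s + k) := by
  simp [br, Lb, Mb, Finsupp.sum_single_index, scf]

lemma scf_MM (a : Bool × ℤ) (s t : ℤ) : scf F k a (true, s) (true, t) = 0 := by
  rcases a with ⟨_|_, r⟩ <;> simp [scf]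

lemma br_xMM (x : Afk) (s t : ℤ) : br F k x (Mb s) (Mb t) = 0 := by
  rw [br]
  refine Finset.sum_eq_zero fun a _ => ?_
  simp [Mb, Finsupp.sum_single_index, scf_MM]

noncomputable def Phi (F : ℤ → ℂ) (x : Afk) : ℂ := x.sum fun p c => c * fval F p

lemma Phi_eq_zero (x : Afk) (h : ∀ a, x (true, a) = 0) : Phi F x = 0 := by
  refine Finset.sum_eq_zero fun p _ => ?_
  rcases p with ⟨_|_, a⟩
  · simp [fval]
  · simp [h a]

lemma br1 (x : Afk) (s t b : ℤ) :
    br F k x (Lb s) (Mb t) (false, b)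
      = x (false, b - s - k) * (F t * ((b - s - k - s : ℤ) : ℂ)) := by
  rw [br_apply]
  simp only [Lb, Mb, Finsupp.sum_single_index, zero_mul, mul_zero, mul_one,
    Finsupp.coe_zero, Pi.zero_apply, Finsupp.sum_fun_zero]
  rw [Finsupp.sum_eq_single (false, b - s - k) ?h1 ?h2]
  · simp [scf, Lb, Finsupp.single_apply, show b - s - k + s + k = b by ring]
  case h1 =>
    rintro ⟨_|_, a⟩ _ hne
    · have : a ≠ b - s - k := fun h => hne (by simp [h])
      simp [scf, Lb, Finsupp.single_apply, show a + s + k ≠ b by omega]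
    · simp [scf]
  case h2 => simp

lemma br2 (x : Afk) (r t b : ℤ) :
    br F k (Lb r) x (Mb t) (false, b)
      = x (false, b - r - k) * (F t * ((r - (b - r - k) : ℤ) : ℂ)) := by
  rw [br_apply]
  simp only [Lb, Mb, Finsupp.sum_single_index, zero_mul, mul_zero, mul_one, one_mul,
    Finsupp.coe_zero, Pi.zero_apply, Finsupp.sum_fun_zero]
  rw [Finsupp.sum_eq_single (false, b - r - k) ?h1 ?h2]
  · simp [scf, Lb, Finsupp.single_apply, show r + (b - r - k) + k = b by ring]
  case h1 =>
    rintro ⟨_|_, a⟩ _ hne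
    · have : a ≠ b - r - k := fun h => hne (by simp [h])
      simp [scf, Lb, Finsupp.single_apply, show r + a + k ≠ b by omega]
    · simp [scf]
  case h2 => simp

lemma br4 (x : Afk) (r s b : ℤ) :
    br F k (Lb r) (Mb s) x (false, b)
      = x (false, b - r - k) * (F s * ((b - r - k - r : ℤ) : ℂ)) := by
  rw [br_apply]
  simp only [Lb, Mb, Finsupp.sum_single_index, zero_mul, mul_zero, mul_one, one_mul,
    Finsupp.coe_zero, Pi.zero_apply, Finsupp.sum_fun_zero]
  rw [Finsupp.sum_eq_single (false, b - r - k) ?h1 ?h2]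
  · simp [scf, Lb, Finsupp.single_apply, show r + (b - r - k) + k = b by ring]
  case h1 =>
    rintro ⟨_|_, a⟩ _ hne
    · have : a ≠ b - r - k := fun h => hne (by simp [h])
      simp [scf, Lb, Finsupp.single_apply, show r + a + k ≠ b by omega]
    · simp [scf]
  case h2 => simp

lemma br3 (x : Afk) (r s b : ℤ) :
    br F k (Lb r) (Lb s) x (false, b)
      = Phi F x * ((r - s : ℤ) : ℂ) * (if b = r + s + k then 1 else 0) := by
  rw [br_apply]
  simp only [Lb, Finsupp.sum_single_index, zero_mul, mul_zero, mul_one, one_mul,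
    Finsupp.coe_zero, Pi.zero_apply, Finsupp.sum_fun_zero]
  rw [Phi, Finsupp.sum_mul, Finsupp.sum_mul]
  refine Finset.sum_congr rfl fun p _ => ?_
  rcases p with ⟨_|_, a⟩
  · simp [scf, fval]
  · simp only [scf, fval, Finsupp.smul_apply, smul_eq_mul, Lb, Finsupp.single_apply]
    by_cases hb : b = r + s + k
    · simp [hb]; ring
    · simp [hb, show ¬((false, r+s+k) = ((false : Bool), b)) by simp [Ne, Prod.ext_iff]; omega]

lemma exists_ne3 (x y z : ℤ) : ∃ s : ℤ, s ≠ x ∧ s ≠ y ∧ s ≠ z := by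
  refine ⟨max x (max y z) + 1, ?_, ?_, ?_⟩ <;>
  · have h1 := le_max_left x (max y z)
    have h2 := le_max_right x (max y z)
    have h3 := le_max_left y z
    have h4 := le_max_right y z
    omega

lemma funeq (g : ℤ → ℤ → ℂ)
    (hE : ∀ r s b : ℤ, 3 * ((r : ℂ) - s) * g (r + s + k) b
      = ((b : ℂ) - 2 * s - k) * g r (b - s - k) + (2 * (r : ℂ) + k - b) * g s (b - r - k)) :
    ∀ t a, g t a = 0 := by
  have hE' : ∀ r s b m p q : ℤ, r + s + k = m → b - s - k = p → b - r - k = q →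
      3 * ((r : ℂ) - s) * g m b
        = ((b : ℂ) - 2 * s - k) * g r p + (2 * (r : ℂ) + k - b) * g s q := by
    rintro r s b m p q rfl rfl rfl; exact hE r s b
  have star : ∀ r s t a : ℤ,
      ((r : ℂ) - s) * ((r : ℂ) + s + k - a) * g t a
        = ((r : ℂ) - t) * ((r : ℂ) + 2 * t + k - a - s) * g s (a + s - t)
        + ((s : ℂ) - t) * ((a : ℂ) + r - s - 2 * t - k) * g r (a + r - t) := by
    intro r s t a
    have h1 := hE' (r+s+k) t (a+r+s+2*k) (r+s+t+2*k) (a+r+s+k-t) a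
      (by ring) (by ring) (by ring)
    have h2 := hE' r s (a+r+s+k-t) (r+s+k) (a+r-t) (a+s-t) (by ring) (by ring) (by ring)
    have h3 := hE' (r+t+k) s (a+r+s+2*k) (r+s+t+2*k) (a+r+k) (a+s-t)
      (by ring) (by ring) (by ring)
    have h4 := hE' r t (a+r+k) (r+t+k) (a+r-t) a (by ring) (by ring) (by ring)
    have h5 := hE' r (s+t+k) (a+r+s+2*k) (r+s+t+2*k) (a+r-t) (a+s+k)
      (by ring) (by ring) (by ring)
    have h6 := hE' s t (a+s+k) (s+t+k) (a+s-t) a (by ring) (by ring) (by ring)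
    push_cast at h1 h2 h3 h4 h5 h6 ⊢
    linear_combination (norm := ring_nf)
      (-(3:ℂ)/2 * ((r:ℂ) - s)) * h1
      + (-((a:ℂ) + r + s + k - 2*t)/2) * h2
      + ((3:ℂ)/2 * ((r:ℂ) - t)) * h3
      + (((a:ℂ) + r - s + k)/2) * h4
      + ((3:ℂ)/2 * ((s:ℂ) - t)) * h5
      + (((r:ℂ) - s - a - k)/2) * h6
  have hR : ∀ t a t' : ℤ, a ≠ 2*t + k → t' ≠ a - t - k → g t a = g t' (a + t' - t) := by
    intro t a t' ha ht'
    have hs := star t' (t' - (a - 2*t - k)) t a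
    have hK : ((2 * (a - 2*t - k) * (t' - (a - t - k)) : ℤ) : ℂ) ≠ 0 := by
      rw [Int.cast_ne_zero]
      intro h
      rcases mul_eq_zero.1 h with h | h
      · rcases mul_eq_zero.1 h with h | h
        · norm_num at h
        · omega
      · omega
    refine mul_left_cancel₀ hK ?_
    push_cast at hs ⊢
    linear_combination hs
  have offdiag : ∀ t a : ℤ, a ≠ 2*t + k → g t a = 0 := by
    intro t a ha
    set c := a - t with hc
    obtain ⟨q, hq0, hq1, hqc⟩ := exists_ne3 0 1 (-c - 1)
    set r := c - k + 1 with hr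
    set s := c - k + q with hs
    have e1 : g t a = g r (c + r) := by
      have := hR t a r (by omega) (by omega)
      rwa [show a + r - t = c + r by omega] at this
    have e2 : g t a = g s (c + s) := by
      have := hR t a s (by omega) (by omega)
      rwa [show a + s - t = c + s by omega] at this
    have e3 : g t a = g (r + s + k) (c + r + s + k) := by
      have := hR t a (r + s + k) (by omega) (by omega)
      rwa [show a + (r + s + k) - t = c + r + s + k by ring] at this
    have h := hE r s (c + r + s + k)
    rw [show c + r + s + k - s - k = c + r by ring, show c + r + s + k - r - k = c + s by ring,
      ← e1, ← e2, ← e3] at h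
    have hx : ((1 - q : ℤ) : ℂ) * g t a = 0 := by
      rw [show (1 - q : ℤ) = r - s by omega]
      push_cast
      linear_combination h
    have : ((1 - q : ℤ) : ℂ) ≠ 0 := by rw [Int.cast_ne_zero]; omega
    exact (mul_eq_zero.1 hx).resolve_left this
  have diag : ∀ r : ℤ, g r (2*r + k) = 0 := by
    intro r
    obtain ⟨s, hs1, hs2, hs3⟩ := exists_ne3 r (-k) (2*r + k)
    have h := hE r s (2*r + s + 2*k)
    rw [show 2*r + s + 2*k - s - k = 2*r + k by ring,
      show 2*r + s + 2*k - r - k = r + s + k by ring,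
      offdiag (r + s + k) (2*r + s + 2*k) (by omega),
      offdiag s (r + s + k) (by omega)] at h
    have hx : ((2*r + k - s : ℤ) : ℂ) * g r (2*r + k) = 0 := by
      push_cast at h ⊢
      linear_combination -h
    have : ((2*r + k - s : ℤ) : ℂ) ≠ 0 := by rw [Int.cast_ne_zero]; omega
    exact (mul_eq_zero.1 hx).resolve_left this
  intro t a
  by_cases h : a = 2*t + k
  · rw [h]; exact diag t
  · exact offdiag t a h

variable (mul : Afk →ₗ[ℂ] Afk →ₗ[ℂ] Afk)
variable (hcompat : ∀ u x y z, (3 : ℂ) • mul u (br F k x y z) =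
      br F k (mul u x) y z + br F k x (mul u y) z + br F k x y (mul u z))

include hcompat in
lemma compat_coeff (u : Afk) (r s t : ℤ) (p : Bool × ℤ) :
    (3 : ℂ) * (F t * ((r - s : ℤ) : ℂ)) * (mul u (Lb (r + s + k))) p
      = br F k (mul u (Lb r)) (Lb s) (Mb t) p + br F k (Lb r) (mul u (Lb s)) (Mb t) p
        + br F k (Lb r) (Lb s) (mul u (Mb t)) p := by
  have h := hcompat u (Lb r) (Lb s) (Mb t)
  rw [br_LLM] at h
  have h' := DFunLike.congr_fun h p
  simp only [map_smul, Finsupp.smul_apply, Finsupp.add_apply, smul_eq_mul] at h'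
  linear_combination h'

include hcompat in
lemma stepA (t0 : ℤ) (ht0 : F t0 ≠ 0) (u : Afk) (m a : ℤ) :
    (mul u (Lb m)) (true, a) = 0 := by
  obtain ⟨r, s, hrs, hne⟩ : ∃ r s : ℤ, r + s + k = m ∧ r ≠ s := by
    by_cases hm : m = k
    · exact ⟨1, -1, by omega, by omega⟩
    · exact ⟨m - k, 0, by omega, by omega⟩
  have h := compat_coeff F k mul hcompat u r s t0 (true, a)
  rw [br_true, br_true, br_true, hrs] at h
  have hA : (3 : ℂ) * (F t0 * ((r - s : ℤ) : ℂ)) ≠ 0 := by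
    refine mul_ne_zero (by norm_num) (mul_ne_zero ht0 ?_)
    rw [Int.cast_ne_zero]; omega
  simp only [add_zero] at h
  exact (mul_eq_zero.1 h).resolve_left hA

include hcompat in
lemma compat_false (u : Afk) (r s t b : ℤ) :
    (3 : ℂ) * (F t * ((r - s : ℤ) : ℂ)) * (mul u (Lb (r + s + k))) (false, b)
      = (mul u (Lb r)) (false, b - s - k) * (F t * ((b - s - k - s : ℤ) : ℂ))
      + (mul u (Lb s)) (false, b - r - k) * (F t * ((r - (b - r - k) : ℤ) : ℂ))
      + Phi F (mul u (Mb t)) * ((r - s : ℤ) : ℂ) * (if b = r + s + k then 1 else 0) := by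
  have h := compat_coeff F k mul hcompat u r s t (false, b)
  rw [br1, br2, br3] at h
  exact h

end Aux

/-- For any transposed Poisson structure `·` on `A_{f,k}` one has
`L_i·L_j = 0`, and there is `α ∈ ℂ` with `L_i·M_j = α f(M_j) L_i` for all `i,j`. -/
theorem Afk_transposed_poisson_LL_LM (F : ℤ → ℂ) (hF : ∃ t, F t ≠ 0) (k : ℤ)
    (mul : Afk →ₗ[ℂ] Afk →ₗ[ℂ] Afk)
    (hcomm : ∀ x y, mul x y = mul y x)
    (hassoc : ∀ x y z, mul (mul x y) z = mul x (mul y z))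
    (hcompat : ∀ u x y z, (3 : ℂ) • mul u (br F k x y z) =
      br F k (mul u x) y z + br F k x (mul u y) z + br F k x y (mul u z)) :
    (∀ i j : ℤ, mul (Lb i) (Lb j) = 0) ∧
    (∃ α : ℂ, ∀ i j : ℤ, mul (Lb i) (Mb j) = (α * F j) • Lb i) := by
  obtain ⟨t0, ht0⟩ := hF
  have hMpart : ∀ (u : Afk) (m a : ℤ), (mul u (Lb m)) (true, a) = 0 :=
    stepA F k mul hcompat t0 ht0
  have hPhiLM : ∀ i t : ℤ, Phi F (mul (Lb i) (Mb t)) = 0 := by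
    intro i t
    refine Phi_eq_zero F _ fun a => ?_
    rw [hcomm]
    exact hMpart (Mb t) i a
  -- Part 1 : L_i · L_j = 0
  have hCf : ∀ i r b : ℤ, (mul (Lb i) (Lb r)) (false, b) = 0 := by
    intro i
    refine funeq k (fun r b => (mul (Lb i) (Lb r)) (false, b)) (fun r s b => ?_)
    have h := compat_false F k mul hcompat (Lb i) r s t0 b
    rw [hPhiLM] at h
    refine mul_left_cancel₀ ht0 ?_
    push_cast at h ⊢
    linear_combination h
  have hLL : ∀ i j : ℤ, mul (Lb i) (Lb j) = 0 := by
    intro i j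
    ext p
    rcases p with ⟨_|_, a⟩
    · simpa using hCf i j a
    · simpa using hMpart (Lb i) j a
  refine ⟨hLL, ?_⟩
  -- Part 2 : L_i · M_j
  have hE2 : ∀ s t i a : ℤ,
      F t * (mul (Lb i) (Mb s)) (false, a) = F s * (mul (Lb i) (Mb t)) (false, a) := by
    intro s t i a
    have h := hcompat (Lb i) (Lb (a+1)) (Mb s) (Mb t)
    rw [br_xMM, br_xMM, map_zero, smul_zero] at h
    have h' := DFunLike.congr_fun h (false, a + (a+1) + k)
    simp only [Finsupp.coe_zero, Pi.zero_apply, Finsupp.add_apply] at h'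
    rw [br2, br4, show a + (a+1) + k - (a+1) - k = a by ring] at h'
    push_cast at h' ⊢
    linear_combination -h'
  set Hc : ℂ := Phi F (mul (Mb t0) (Mb t0)) with hHc
  set g : ℤ → ℤ → ℂ := fun r a =>
    F t0 * (F t0 * (mul (Lb r) (Mb t0)) (false, a)) - Hc * F t0 * (if a = r then 1 else 0)
    with hg
  have hEP : ∀ r s b : ℤ,
      (3 : ℂ) * (F t0 * ((r - s : ℤ) : ℂ)) * (mul (Lb (r+s+k)) (Mb t0)) (false, b)
        = (mul (Lb r) (Mb t0)) (false, b - s - k) * (F t0 * ((b - s - k - s : ℤ) : ℂ))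
        + (mul (Lb s) (Mb t0)) (false, b - r - k) * (F t0 * ((r - (b - r - k) : ℤ) : ℂ))
        + Hc * ((r - s : ℤ) : ℂ) * (if b = r + s + k then 1 else 0) := by
    intro r s b
    have h := compat_false F k mul hcompat (Mb t0) r s t0 b
    rw [hcomm (Mb t0) (Lb (r+s+k)), hcomm (Mb t0) (Lb r), hcomm (Mb t0) (Lb s)] at h
    exact h
  have hg0 : ∀ r a : ℤ, g r a = 0 := by
    refine funeq k g fun r s b => ?_
    have h := hEP r s b
    simp only [hg]
    by_cases hb : b = r + s + k
    · rw [if_pos hb] at h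
      rw [if_pos hb, if_pos (show b - s - k = r by omega), if_pos (show b - r - k = s by omega)]
      push_cast at h ⊢
      linear_combination (F t0) * h
    · rw [if_neg hb] at h
      rw [if_neg hb, if_neg (show ¬(b - s - k = r) by omega),
        if_neg (show ¬(b - r - k = s) by omega)]
      push_cast at h ⊢
      linear_combination (F t0) * h
  have hV : ∀ r a : ℤ,
      (mul (Lb r) (Mb t0)) (false, a) = Hc * (F t0)⁻¹ * (if a = r then 1 else 0) := by
    intro r a
    have h := hg0 r a
    simp only [hg] at h
    rw [sub_eq_zero] at h
    by_cases hai : a = r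
    · rw [if_pos hai] at h
      rw [if_pos hai, mul_one]
      have h2 : F t0 * (F t0 * (Hc * (F t0)⁻¹)) = Hc * F t0 * 1 := by
        field_simp
      exact mul_left_cancel₀ ht0 (mul_left_cancel₀ ht0 (h.trans h2.symm))
    · rw [if_neg hai] at h
      rw [if_neg hai, mul_zero]
      simpa [ht0] using h
  refine ⟨Hc * (F t0)⁻¹ * (F t0)⁻¹, fun i j => ?_⟩
  ext p
  rcases p with ⟨_|_, a⟩
  · have h1 := hE2 j t0 i a
    rw [hV i a] at h1
    have h2 : (mul (Lb i) (Mb j)) (false, a)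
        = Hc * (F t0)⁻¹ * (F t0)⁻¹ * F j * (if a = i then 1 else 0) := by
      refine mul_left_cancel₀ ht0 ?_
      rw [h1]
      field_simp
    rw [Finsupp.smul_apply, smul_eq_mul, h2, Lb, Finsupp.single_apply]
    by_cases hai : a = i
    · simp [hai]
    · simp [hai, show ¬((false, i) = ((false : Bool), a)) by simp [Prod.ext_iff]; omega]
  · rw [hcomm]
    rw [Finsupp.smul_apply, smul_eq_mul, hMpart (Mb j) i a, Lb]
    simp [Finsupp.single_apply]
end

section
/- Let (A_{f,k}, ·, [·,·,·]) be the transposed Poisson 3-Lie algebra with L_i·L_j = 0, L_i·M_j = α f(M_j)L_i, M_i·M_j = f(M_i)f(M_j)∑_p c_p L_p + ∑_q d_{i,j,q} M_q (coefficients satisfying symmetry, ∑_q f(M_q)d_{i,j,q} = αf(M_i)f(M_j), and the associativity relation). Then (A_{f,k}, ·, [·,·,·]) is a Poisson 3-Lie algebra (i.e., satisfies [x,y,u·v] = u·[x,y,v] + [x,y,u]·v) if and only if α = 0 and c_p = 0 for all p ∈ ℤ. -/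
noncomputable def T3 (F : ℤ → ℂ) (k : ℤ) (a b : Bool × ℤ) : Afk →ₗ[ℂ] Afk :=
  Finsupp.lsum ℂ fun cidx => LinearMap.toSpanSingleton ℂ Afk (scf F k a b cidx)

noncomputable def T2 (F : ℤ → ℂ) (k : ℤ) (a : Bool × ℤ) : Afk →ₗ[ℂ] Afk →ₗ[ℂ] Afk :=
  Finsupp.lsum ℂ fun b => LinearMap.toSpanSingleton ℂ (Afk →ₗ[ℂ] Afk) (T3 F k a b)

noncomputable def Tm (F : ℤ → ℂ) (k : ℤ) : Afk →ₗ[ℂ] Afk →ₗ[ℂ] Afk →ₗ[ℂ] Afk :=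
  Finsupp.lsum ℂ fun a => LinearMap.toSpanSingleton ℂ (Afk →ₗ[ℂ] Afk →ₗ[ℂ] Afk) (T2 F k a)

lemma sum_lm_apply {M N : Type*} [AddCommMonoid M] [Module ℂ M] [AddCommMonoid N] [Module ℂ N]
    (l : Afk) (g : (Bool × ℤ) → ℂ → (M →ₗ[ℂ] N)) (w : M) :
    (l.sum g) w = l.sum fun a ca => g a ca w :=
  map_finsuppSum (LinearMap.applyₗ w) l g

lemma br_eq_T (F : ℤ → ℂ) (k : ℤ) (x y z : Afk) : br F k x y z = Tm F k x y z := by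
  rw [br, Tm, Finsupp.lsum_apply, sum_lm_apply, sum_lm_apply]
  refine Finsupp.sum_congr fun a _ => ?_
  rw [LinearMap.toSpanSingleton_apply, LinearMap.smul_apply, LinearMap.smul_apply,
    T2, Finsupp.lsum_apply, sum_lm_apply, Finsupp.smul_sum]
  refine Finsupp.sum_congr fun b _ => ?_
  rw [LinearMap.toSpanSingleton_apply, LinearMap.smul_apply, T3, Finsupp.lsum_apply,
    Finsupp.smul_sum, Finsupp.smul_sum]
  refine Finsupp.sum_congr fun cidx _ => ?_
  rw [LinearMap.toSpanSingleton_apply, smul_smul, smul_smul, mul_assoc]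

@[simp] lemma T3_single (F : ℤ → ℂ) (k : ℤ) (a b cidx : Bool × ℤ) (cc : ℂ) :
    T3 F k a b (Finsupp.single cidx cc) = cc • scf F k a b cidx := by
  rw [T3, Finsupp.lsum_single, LinearMap.toSpanSingleton_apply]

@[simp] lemma T2_single (F : ℤ → ℂ) (k : ℤ) (a b : Bool × ℤ) (cb : ℂ) :
    T2 F k a (Finsupp.single b cb) = cb • T3 F k a b := by
  rw [T2, Finsupp.lsum_single, LinearMap.toSpanSingleton_apply]

@[simp] lemma Tm_single (F : ℤ → ℂ) (k : ℤ) (a : Bool × ℤ) (ca : ℂ) :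
    Tm F k (Finsupp.single a ca) = ca • T2 F k a := by
  rw [Tm, Finsupp.lsum_single, LinearMap.toSpanSingleton_apply]

@[simp] lemma T3_Lb (F : ℤ → ℂ) (k : ℤ) (a b : Bool × ℤ) (t : ℤ) :
    T3 F k a b (Lb t) = scf F k a b (false, t) := by rw [Lb, T3_single, one_smul]
@[simp] lemma T3_Mb (F : ℤ → ℂ) (k : ℤ) (a b : Bool × ℤ) (t : ℤ) :
    T3 F k a b (Mb t) = scf F k a b (true, t) := by rw [Mb, T3_single, one_smul]
@[simp] lemma T2_Lb (F : ℤ → ℂ) (k : ℤ) (a : Bool × ℤ) (t : ℤ) :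
    T2 F k a (Lb t) = T3 F k a (false, t) := by rw [Lb, T2_single, one_smul]
@[simp] lemma T2_Mb (F : ℤ → ℂ) (k : ℤ) (a : Bool × ℤ) (t : ℤ) :
    T2 F k a (Mb t) = T3 F k a (true, t) := by rw [Mb, T2_single, one_smul]
@[simp] lemma Tm_Lb (F : ℤ → ℂ) (k : ℤ) (t : ℤ) :
    Tm F k (Lb t) = T2 F k (false, t) := by rw [Lb, Tm_single, one_smul]
@[simp] lemma Tm_Mb (F : ℤ → ℂ) (k : ℤ) (t : ℤ) :
    Tm F k (Mb t) = T2 F k (true, t) := by rw [Mb, Tm_single, one_smul]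

lemma scf_shape (F : ℤ → ℂ) (k : ℤ) (a b cidx : Bool × ℤ) :
    ∃ (s : ℂ) (m : ℤ), scf F k a b cidx = s • Lb m := by
  rcases a with ⟨ab, r⟩; rcases b with ⟨bb, s⟩; rcases cidx with ⟨cb, t⟩
  cases ab <;> cases bb <;> cases cb
  exacts [⟨0, 0, by simp [scf]⟩, ⟨F t * ((r - s : ℤ) : ℂ), r + s + k, rfl⟩,
    ⟨F s * ((t - r : ℤ) : ℂ), r + t + k, rfl⟩, ⟨0, 0, by simp [scf]⟩,
    ⟨F r * ((s - t : ℤ) : ℂ), s + t + k, rfl⟩, ⟨0, 0, by simp [scf]⟩,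
    ⟨0, 0, by simp [scf]⟩, ⟨0, 0, by simp [scf]⟩]

example (F : ℤ → ℂ) (k r s t : ℤ) : scf F k (false, r) (false, s) (false, t) = 0 := by
  simp [scf]
example (F : ℤ → ℂ) (k r s t : ℤ) :
    scf F k (false, r) (false, s) (true, t) = (F t * ((r - s : ℤ) : ℂ)) • Lb (r + s + k) := by
  simp [scf]

lemma sum_smul_fixed (l : ℤ →₀ ℂ) (g : ℤ → ℂ → ℂ) (w : Afk) :
    (l.sum fun q v => (g q v) • w) = (l.sum g) • w := by
  rw [Finsupp.sum, Finsupp.sum, Finset.sum_smul]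

lemma fwd_alpha (F : ℤ → ℂ) (hF : ∃ t, F t ≠ 0) (k : ℤ)
    (α : ℂ) (c : ℤ →₀ ℂ) (d : ℤ → ℤ → ℤ →₀ ℂ)
    (hsum : ∀ i j : ℤ, ((d i j).sum fun q v => F q * v) = α * F i * F j)
    (mul : Afk →ₗ[ℂ] Afk →ₗ[ℂ] Afk)
    (hLL : ∀ i j : ℤ, mul (Lb i) (Lb j) = 0)
    (hLM : ∀ i j : ℤ, mul (Lb i) (Mb j) = (α * F j) • Lb i)
    (hML : ∀ i j : ℤ, mul (Mb i) (Lb j) = (α * F i) • Lb j)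
    (hMM : ∀ i j : ℤ, mul (Mb i) (Mb j) =
      (F i * F j) • (c.sum fun p v => v • Lb p) + (d i j).sum fun q v => v • Mb q)
    (h : ∀ x y u v : Afk, br F k x y (mul u v) =
      mul u (br F k x y v) + mul (br F k x y u) v) : α = 0 := by
  obtain ⟨t0, ht0⟩ := hF
  have hsum' : ∀ i j : ℤ, ((d i j).sum fun q v => v * F q) = α * F i * F j := by
    intro i j; rw [← hsum i j]; exact Finsupp.sum_congr fun q _ => mul_comm _ _
  have e := h (Lb 1) (Lb 0) (Mb t0) (Mb t0)
  simp only [br_eq_T] at e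
  rw [hMM] at e
  simp only [Tm_Lb, T2_Lb, T2_Mb, T3_Lb, T3_Mb, map_add, map_smul, map_finsuppSum] at e
  simp only [scf] at e
  simp only [smul_zero, Finsupp.sum_fun_zero, zero_add, Int.sub_zero, Int.cast_one, mul_one,
    map_smul, LinearMap.smul_apply, hML, hLM, smul_smul] at e
  rw [sum_smul_fixed (d t0 t0) (fun q v => v * F q) (Lb (1 + 0 + k)), hsum', ← add_smul] at e
  have escal := smul_left_injective ℂ (by simp [Lb, Finsupp.single_eq_zero] : Lb (1 + 0 + k) ≠ 0) e
  have h0 : α * F t0 * F t0 = 0 := by linear_combination -escal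
  rcases mul_eq_zero.mp h0 with h1 | h1
  · rcases mul_eq_zero.mp h1 with h2 | h2
    · exact h2
    · exact absurd h2 ht0
  · exact absurd h1 ht0

lemma fwd_c (F : ℤ → ℂ) (t0 : ℤ) (ht0 : F t0 ≠ 0) (k : ℤ)
    (c : ℤ →₀ ℂ) (d : ℤ → ℤ → ℤ →₀ ℂ)
    (mul : Afk →ₗ[ℂ] Afk →ₗ[ℂ] Afk)
    (hMM : ∀ i j : ℤ, mul (Mb i) (Mb j) =
      (F i * F j) • (c.sum fun p v => v • Lb p) + (d i j).sum fun q v => v • Mb q)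
    (h : ∀ x y u v : Afk, br F k x y (mul u v) =
      mul u (br F k x y v) + mul (br F k x y u) v) : ∀ p : ℤ, c p = 0 := by
  intro p
  have e := h (Lb (p - 1)) (Mb t0) (Mb t0) (Mb t0)
  simp only [br_eq_T] at e
  rw [hMM] at e
  simp only [Tm_Lb, T2_Mb, T3_Lb, T3_Mb, map_add, map_smul, map_finsuppSum] at e
  simp only [scf, smul_zero, Finsupp.sum_fun_zero, add_zero, map_zero, LinearMap.zero_apply,
    zero_add] at e
  have e2 := DFunLike.congr_fun e (false, p - 1 + p + k)
  simp only [Finsupp.smul_apply, Finsupp.sum_apply, Finsupp.coe_zero, Pi.zero_apply,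
    Lb, Finsupp.single_apply, smul_eq_mul, Prod.mk.injEq, mul_ite, mul_zero, mul_one] at e2
  by_cases hp : p ∈ c.support
  · simp only [true_and, add_left_inj, add_right_inj] at e2
    rw [Finsupp.sum_ite_eq' c p (fun a b => b * (F t0 * ((a - (p - 1) : ℤ) : ℂ))), if_pos hp] at e2
    have : ((p - (p - 1) : ℤ) : ℂ) = 1 := by norm_num
    rw [this, mul_one] at e2
    rcases mul_eq_zero.mp e2 with h1 | h1
    · rcases mul_eq_zero.mp h1 with h2 | h2 <;> exact absurd h2 ht0
    · rcases mul_eq_zero.mp h1 with h2 | h2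
      · exact h2
      · exact absurd h2 ht0
  · exact Finsupp.notMem_support_iff.mp hp

@[simp] lemma single_one_false (i : ℤ) : (Finsupp.single ((false, i) : Bool × ℤ) (1:ℂ)) = Lb i := rfl
@[simp] lemma single_one_true (i : ℤ) : (Finsupp.single ((true, i) : Bool × ℤ) (1:ℂ)) = Mb i := rfl

lemma bwd_leib (F : ℤ → ℂ) (k : ℤ) (d : ℤ → ℤ → ℤ →₀ ℂ)
    (hsum0 : ∀ i j : ℤ, ((d i j).sum fun q v => F q * v) = 0)
    (mul : Afk →ₗ[ℂ] Afk →ₗ[ℂ] Afk)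
    (hLL : ∀ i j : ℤ, mul (Lb i) (Lb j) = 0)
    (hLM0 : ∀ i j : ℤ, mul (Lb i) (Mb j) = 0)
    (hML0 : ∀ i j : ℤ, mul (Mb i) (Lb j) = 0)
    (hMM' : ∀ i j : ℤ, mul (Mb i) (Mb j) = (d i j).sum fun q v => v • Mb q) :
    ∀ x y u v : Afk, br F k x y (mul u v) =
      mul u (br F k x y v) + mul (br F k x y u) v := by
  have mulLscf : ∀ (i : ℤ) a b cc, mul (Lb i) (scf F k a b cc) = 0 := by
    intro i a b cc
    obtain ⟨s, m, hm⟩ := scf_shape F k a b cc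
    rw [hm, map_smul, hLL, smul_zero]
  have mulMscf : ∀ (i : ℤ) a b cc, mul (Mb i) (scf F k a b cc) = 0 := by
    intro i a b cc
    obtain ⟨s, m, hm⟩ := scf_shape F k a b cc
    rw [hm, map_smul, hML0, smul_zero]
  have scfmulL : ∀ a b cc (j : ℤ), mul (scf F k a b cc) (Lb j) = 0 := by
    intro a b cc j
    obtain ⟨s, m, hm⟩ := scf_shape F k a b cc
    rw [hm, map_smul, LinearMap.smul_apply, hLL, smul_zero]
  have scfmulM : ∀ a b cc (j : ℤ), mul (scf F k a b cc) (Mb j) = 0 := by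
    intro a b cc j
    obtain ⟨s, m, hm⟩ := scf_shape F k a b cc
    rw [hm, map_smul, LinearMap.smul_apply, hLM0, smul_zero]
  have core : ∀ a b uu vv : Bool × ℤ,
      Tm F k (Finsupp.single a 1) (Finsupp.single b 1)
        (mul (Finsupp.single uu 1) (Finsupp.single vv 1)) =
      mul (Finsupp.single uu 1)
          (Tm F k (Finsupp.single a 1) (Finsupp.single b 1) (Finsupp.single vv 1)) +
        mul (Tm F k (Finsupp.single a 1) (Finsupp.single b 1) (Finsupp.single uu 1))
          (Finsupp.single vv 1) := by
    intro a b uu vv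
    rcases uu with ⟨ub, i⟩; rcases vv with ⟨vb, j⟩
    have hT : ∀ z : Afk, Tm F k (Finsupp.single a 1) (Finsupp.single b 1) z = T3 F k a b z := by
      intro z
      rw [Tm_single, LinearMap.smul_apply, one_smul, T2_single, LinearMap.smul_apply, one_smul]
    cases ub <;> cases vb <;>
      simp only [single_one_false, single_one_true, hT]
    · simp [hLL, mulLscf, scfmulL]
    · simp [hLM0, mulLscf, scfmulM]
    · simp [hML0, mulMscf, scfmulL]
    · -- M,M case
      rw [hMM', map_finsuppSum]
      simp only [map_smul, T3_Mb, mulMscf, scfmulM, add_zero, zero_add]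
      rcases a with ⟨ab, r⟩; rcases b with ⟨bb, s⟩
      cases ab <;> cases bb
      · -- L,L
        simp only [scf]
        have step : ((d i j).sum fun q v => v • (F q * ((r - s : ℤ) : ℂ)) • Lb (r + s + k)) =
            ((d i j).sum fun q v => ((F q * v) * ((r - s : ℤ) : ℂ)) • Lb (r + s + k)) :=
          Finsupp.sum_congr fun q hq => by rw [smul_smul]; ring_nf
        rw [step, sum_smul_fixed (d i j) (fun q v => (F q * v) * ((r - s : ℤ) : ℂ)) _,
          ← Finsupp.sum_mul, hsum0, zero_mul, zero_smul]
      · simp [scf]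
      · simp [scf]
      · simp [scf]
  intro x y u v
  simp only [br_eq_T]
  induction x using Finsupp.induction_linear with
  | zero => simp
  | add f g hf hg => simp only [map_add, LinearMap.add_apply, hf, hg]; abel
  | single a ca =>
    induction y using Finsupp.induction_linear with
    | zero => simp
    | add f g hf hg => simp only [map_add, LinearMap.add_apply, hf, hg]; abel
    | single b cb =>
      induction u using Finsupp.induction_linear with
      | zero => simp
      | add f g hf hg => simp only [map_add, LinearMap.add_apply, hf, hg]; abel
      | single uu cu =>
        induction v using Finsupp.induction_linear with
        | zero => simp
        | add f g hf hg => simp only [map_add, LinearMap.add_apply, hf, hg]; abel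
        | single vv cv =>
          have hs : ∀ (w : Bool × ℤ) (cw : ℂ),
              (Finsupp.single w cw) = cw • Finsupp.single w (1:ℂ) := by
            intro w cw; rw [Finsupp.smul_single, smul_eq_mul, mul_one]
          rw [hs a ca, hs b cb, hs uu cu, hs vv cv]
          simp only [map_smul, LinearMap.smul_apply, smul_add]
          rw [core a b uu vv]
          simp only [smul_add, smul_smul]
          module


/-- The transposed Poisson 3-Lie algebra `(A_{f,k}, ·, [·,·,·])` with
`L_i·L_j = 0`, `L_i·M_j = α f(M_j) L_i`,
`M_i·M_j = f(M_i)f(M_j) ∑_p c_p L_p + ∑_q d_{i,j,q} M_q` is a Poisson 3-Lie algebra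
(satisfies the Leibniz rule) if and only if `α = 0` and all `c_p = 0`. -/
theorem Afk_poisson_iff (F : ℤ → ℂ) (hF : ∃ t, F t ≠ 0) (k : ℤ)
    (α : ℂ) (c : ℤ →₀ ℂ) (d : ℤ → ℤ → ℤ →₀ ℂ)
    (hsym : ∀ i j : ℤ, d i j = d j i)
    (hsum : ∀ i j : ℤ, ((d i j).sum fun q v => F q * v) = α * F i * F j)
    (hass : ∀ r s t p : ℤ,
      ((d r s).sum fun q v => v * (d q t) p) = ((d s t).sum fun q v => v * (d q r) p))
    (mul : Afk →ₗ[ℂ] Afk →ₗ[ℂ] Afk)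
    (hLL : ∀ i j : ℤ, mul (Lb i) (Lb j) = 0)
    (hLM : ∀ i j : ℤ, mul (Lb i) (Mb j) = (α * F j) • Lb i)
    (hML : ∀ i j : ℤ, mul (Mb i) (Lb j) = (α * F i) • Lb j)
    (hMM : ∀ i j : ℤ, mul (Mb i) (Mb j) =
      (F i * F j) • (c.sum fun p v => v • Lb p) + (d i j).sum fun q v => v • Mb q) :
    (∀ x y u v : Afk, br F k x y (mul u v) =
      mul u (br F k x y v) + mul (br F k x y u) v) ↔
    (α = 0 ∧ ∀ p : ℤ, c p = 0) := by
  constructor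
  · intro h
    obtain ⟨t0, ht0⟩ := hF
    refine ⟨fwd_alpha F ⟨t0, ht0⟩ k α c d hsum mul hLL hLM hML hMM h, ?_⟩
    exact fwd_c F t0 ht0 k c d mul hMM h
  · rintro ⟨hα, hc⟩
    have hc0 : (c.sum fun p v => v • Lb p) = (0 : Afk) := by
      have hcz : c = 0 := Finsupp.ext hc
      rw [hcz, Finsupp.sum_zero_index]
    have hLM0 : ∀ i j : ℤ, mul (Lb i) (Mb j) = 0 := fun i j => by
      rw [hLM, hα, zero_mul, zero_smul]
    have hML0 : ∀ i j : ℤ, mul (Mb i) (Lb j) = 0 := fun i j => by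
      rw [hML, hα, zero_mul, zero_smul]
    have hMM' : ∀ i j : ℤ, mul (Mb i) (Mb j) = (d i j).sum fun q v => v • Mb q := fun i j => by
      rw [hMM, hc0, smul_zero, zero_add]
    have hsum0 : ∀ i j : ℤ, ((d i j).sum fun q v => F q * v) = 0 := fun i j => by
      rw [hsum, hα, zero_mul, zero_mul]
    exact bwd_leib F k d hsum0 mul hLL hLM0 hML0 hMM'
end

section
/- Let (d_i)_{i∈ℤ} be a finitely supported family of complex numbers and set d_{i,j,p} = d_p f(M_i) f(M_j) and α = ∑_q f(M_q) d_q. Then these coefficients satisfy: d_{i,j,p} = d_{j,i,p}; ∑_q f(M_q) d_{i,j,q} = α f(M_i) f(M_j); and ∑_q d_{r,s,q} d_{q,t,p} = ∑_q d_{s,t,q} d_{q,r,p} for all r,s,t,p ∈ ℤ. Consequently, the multiplication L_i·L_j = 0, L_i·M_j = α f(M_j)L_i, M_i·M_j = f(M_i)f(M_j)(∑_p c_p L_p + ∑_q d_q M_q) defines a transposed Poisson structure on A_{f,k} for any finitely supported (c_p). -/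
noncomputable def Bb (a : Bool × ℤ) : Afk := Finsupp.single a 1

@[simp] lemma Bb_f (i : ℤ) : Bb (false, i) = Lb i := rfl
@[simp] lemma Bb_t (i : ℤ) : Bb (true, i) = Mb i := rfl

lemma single_eq_smul (a : Bool × ℤ) (r : ℂ) : Finsupp.single a r = r • Bb a := by
  simp [Bb, Finsupp.smul_single]

noncomputable def brT (F : ℤ → ℂ) (k : ℤ) : Afk →ₗ[ℂ] Afk →ₗ[ℂ] Afk →ₗ[ℂ] Afk :=
  Finsupp.lsum ℂ fun a => LinearMap.toSpanSingleton ℂ _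
    (Finsupp.lsum ℂ fun b => LinearMap.toSpanSingleton ℂ _
      (Finsupp.lsum ℂ fun cI => LinearMap.toSpanSingleton ℂ _ (scf F k a b cI)))

lemma br_eq (F : ℤ → ℂ) (k : ℤ) (x y z : Afk) : br F k x y z = brT F k x y z := by
  simp only [br, brT, Finsupp.lsum_apply, Finsupp.sum, LinearMap.sum_apply,
    LinearMap.smul_apply, LinearMap.toSpanSingleton_apply, Finset.smul_sum, smul_smul, mul_assoc]

@[simp] lemma brT_single (F k) (a b c : Bool × ℤ) :
    brT F k (Bb a) (Bb b) (Bb c) = scf F k a b c := by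
  simp [brT, Bb, Finsupp.lsum_single, LinearMap.toSpanSingleton_apply]

lemma fsum_smul (t : ℤ →₀ ℂ) (g : ℤ → ℂ → ℂ) (w : Afk) :
    (t.sum fun i v => g i v • w) = (t.sum g) • w := by
  simp [Finsupp.sum, Finset.sum_smul]

lemma fsum_add (t : ℤ →₀ ℂ) (g h : ℤ → ℂ → Afk) :
    (t.sum fun p v => g p v + h p v) = t.sum g + t.sum h := Finset.sum_add_distrib

lemma fsum_zero' (t : ℤ →₀ ℂ) (g : ℤ → ℂ → Afk) (h0 : ∀ p v, g p v = 0) : t.sum g = 0 := by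
  simp [Finsupp.sum, h0]

lemma mulsum₂ (mul : Afk →ₗ[ℂ] Afk →ₗ[ℂ] Afk) (x : Afk) (t : ℤ →₀ ℂ) (g : ℤ → ℂ → Afk) :
    mul x (t.sum g) = t.sum fun i v => mul x (g i v) := map_finsuppSum _ _ _

lemma mulsum₁ (mul : Afk →ₗ[ℂ] Afk →ₗ[ℂ] Afk) (t : ℤ →₀ ℂ) (g : ℤ → ℂ → Afk) (y : Afk) :
    mul (t.sum g) y = t.sum fun i v => mul (g i v) y := by
  rw [map_finsuppSum]
  simp [Finsupp.sum, LinearMap.sum_apply]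

lemma brTsum₁ (F k) (t : ℤ →₀ ℂ) (g : ℤ → ℂ → Afk) (y z : Afk) :
    brT F k (t.sum g) y z = t.sum fun i v => brT F k (g i v) y z := by
  rw [map_finsuppSum]
  simp [Finsupp.sum, LinearMap.sum_apply]

lemma brTsum₂ (F k) (x : Afk) (t : ℤ →₀ ℂ) (g : ℤ → ℂ → Afk) (z : Afk) :
    brT F k x (t.sum g) z = t.sum fun i v => brT F k x (g i v) z := by
  rw [map_finsuppSum]
  simp [Finsupp.sum, LinearMap.sum_apply]

lemma brTsum₃ (F k) (x y : Afk) (t : ℤ →₀ ℂ) (g : ℤ → ℂ → Afk) :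
    brT F k x y (t.sum g) = t.sum fun i v => brT F k x y (g i v) :=
  map_finsuppSum _ _ _

lemma comm_of_basis (mul : Afk →ₗ[ℂ] Afk →ₗ[ℂ] Afk)
    (hB : ∀ a b, mul (Bb a) (Bb b) = mul (Bb b) (Bb a)) : ∀ x y : Afk, mul x y = mul y x := by
  intro x y
  induction x using Finsupp.induction_linear with
  | zero => simp
  | add f g hf hg => simp [map_add, hf, hg]
  | single a r =>
    induction y using Finsupp.induction_linear with
    | zero => simp
    | add f g hf hg => simp [map_add, hf, hg]
    | single b s =>
      rw [single_eq_smul a, single_eq_smul b]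
      simp [map_smul, smul_smul, hB a b, mul_comm r s]

lemma assoc_of_basis (mul : Afk →ₗ[ℂ] Afk →ₗ[ℂ] Afk)
    (hB : ∀ a b e, mul (mul (Bb a) (Bb b)) (Bb e) = mul (Bb a) (mul (Bb b) (Bb e))) :
    ∀ x y z : Afk, mul (mul x y) z = mul x (mul y z) := by
  intro x y z
  induction x using Finsupp.induction_linear with
  | zero => simp
  | add f g hf hg => simp [map_add, hf, hg]
  | single a r =>
    induction y using Finsupp.induction_linear with
    | zero => simp
    | add f g hf hg => simp [map_add, hf, hg]
    | single b s =>
      induction z using Finsupp.induction_linear with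
      | zero => simp
      | add f g hf hg => simp [map_add, hf, hg]
      | single e w =>
        rw [single_eq_smul a, single_eq_smul b, single_eq_smul e]
        simp [map_smul, smul_smul, hB a b e, mul_comm, mul_left_comm]

lemma leib_of_basis (F : ℤ → ℂ) (k : ℤ) (mul : Afk →ₗ[ℂ] Afk →ₗ[ℂ] Afk)
    (hB : ∀ a b e f, (3 : ℂ) • mul (Bb a) (brT F k (Bb b) (Bb e) (Bb f)) =
      brT F k (mul (Bb a) (Bb b)) (Bb e) (Bb f) + brT F k (Bb b) (mul (Bb a) (Bb e)) (Bb f) +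
      brT F k (Bb b) (Bb e) (mul (Bb a) (Bb f))) :
    ∀ u x y z : Afk, (3 : ℂ) • mul u (brT F k x y z) =
      brT F k (mul u x) y z + brT F k x (mul u y) z + brT F k x y (mul u z) := by
  intro u x y z
  induction u using Finsupp.induction_linear with
  | zero => simp
  | add f g hf hg =>
      simp only [map_add, LinearMap.add_apply, smul_add, hf, hg]; abel
  | single a r =>
    induction x using Finsupp.induction_linear with
    | zero => simp
    | add f g hf hg =>
        simp only [map_add, LinearMap.add_apply, smul_add, hf, hg]; abel
    | single b rb =>
      induction y using Finsupp.induction_linear with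
      | zero => simp
      | add f g hf hg =>
          simp only [map_add, LinearMap.add_apply, smul_add, hf, hg]; abel
      | single e re =>
        induction z using Finsupp.induction_linear with
        | zero => simp
        | add f g hf hg =>
            simp only [map_add, LinearMap.add_apply, smul_add, hf, hg]; abel
        | single f rf =>
          rw [single_eq_smul a, single_eq_smul b, single_eq_smul e, single_eq_smul f]
          simp only [map_smul, LinearMap.smul_apply, smul_smul]
          rw [show (3:ℂ) * (rf * (re * rb) * r) = (rf * (re * (rb * r))) * 3 by ring]
          rw [mul_smul, hB a b e f]
          simp only [smul_add]
          congr 1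
          · congr 1
            all_goals (congr 1; ring)
          · congr 1; ring

section basisbr
variable (F : ℤ → ℂ) (k : ℤ)

@[simp] lemma brT_LLL (r s t : ℤ) : brT F k (Lb r) (Lb s) (Lb t) = 0 :=
  brT_single F k (false, r) (false, s) (false, t)
@[simp] lemma brT_LLM (r s t : ℤ) :
    brT F k (Lb r) (Lb s) (Mb t) = (F t * ((r - s : ℤ) : ℂ)) • Lb (r + s + k) :=
  brT_single F k (false, r) (false, s) (true, t)
@[simp] lemma brT_LML (r s t : ℤ) :
    brT F k (Lb r) (Mb s) (Lb t) = (F s * ((t - r : ℤ) : ℂ)) • Lb (r + t + k) :=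
  brT_single F k (false, r) (true, s) (false, t)
@[simp] lemma brT_MLL (r s t : ℤ) :
    brT F k (Mb r) (Lb s) (Lb t) = (F r * ((s - t : ℤ) : ℂ)) • Lb (s + t + k) :=
  brT_single F k (true, r) (false, s) (false, t)
@[simp] lemma brT_LMM (r s t : ℤ) : brT F k (Lb r) (Mb s) (Mb t) = 0 :=
  brT_single F k (false, r) (true, s) (true, t)
@[simp] lemma brT_MLM (r s t : ℤ) : brT F k (Mb r) (Lb s) (Mb t) = 0 :=
  brT_single F k (true, r) (false, s) (true, t)
@[simp] lemma brT_MML (r s t : ℤ) : brT F k (Mb r) (Mb s) (Lb t) = 0 :=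
  brT_single F k (true, r) (true, s) (false, t)
@[simp] lemma brT_MMM (r s t : ℤ) : brT F k (Mb r) (Mb s) (Mb t) = 0 :=
  brT_single F k (true, r) (true, s) (true, t)

end basisbr

lemma dsum_c {F : ℤ → ℂ} {d : ℤ →₀ ℂ} {α : ℂ} (hα : α = d.sum fun q v => F q * v) (c₀ : ℂ) :
    (d.sum fun q v => v * (F q * c₀)) = α * c₀ := by
  rw [hα, Finsupp.sum_mul]
  exact Finsupp.sum_congr fun q _ => by ring

lemma fsum_smul' (t : ℤ →₀ ℂ) (g : ℤ → ℂ → ℂ) (e : ℂ) (w : Afk) (he : t.sum g = e) :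
    (t.sum fun i v => g i v • w) = e • w := by rw [fsum_smul, he]

section main
variable {F : ℤ → ℂ} {k : ℤ} {d c : ℤ →₀ ℂ} {α : ℂ} {mul : Afk →ₗ[ℂ] Afk →ₗ[ℂ] Afk}

lemma mul_L_C (hLL : ∀ i j : ℤ, mul (Lb i) (Lb j) = 0) (i : ℤ) :
    mul (Lb i) (c.sum fun p v => v • Lb p) = 0 := by
  rw [mulsum₂]
  exact fsum_zero' _ _ fun p v => by rw [map_smul, hLL, smul_zero]

lemma mul_C_L (hLL : ∀ i j : ℤ, mul (Lb i) (Lb j) = 0) (i : ℤ) :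
    mul (c.sum fun p v => v • Lb p) (Lb i) = 0 := by
  rw [mulsum₁]
  exact fsum_zero' _ _ fun p v => by
    rw [map_smul, LinearMap.smul_apply, hLL, smul_zero]

lemma mul_L_D (hα : α = d.sum fun q v => F q * v)
    (hLM : ∀ i j : ℤ, mul (Lb i) (Mb j) = (α * F j) • Lb i) (i : ℤ) :
    mul (Lb i) (d.sum fun q v => v • Mb q) = (α * α) • Lb i := by
  rw [mulsum₂]
  calc (d.sum fun q v => mul (Lb i) (v • Mb q))
      = d.sum fun q v => (v * (F q * α)) • Lb i :=
        Finsupp.sum_congr fun q _ => by rw [map_smul, hLM, smul_smul]; congr 1; ring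
    _ = (α * α) • Lb i := fsum_smul' _ _ _ _ (dsum_c hα α)

lemma mul_D_L (hα : α = d.sum fun q v => F q * v)
    (hML : ∀ i j : ℤ, mul (Mb i) (Lb j) = (α * F i) • Lb j) (i : ℤ) :
    mul (d.sum fun q v => v • Mb q) (Lb i) = (α * α) • Lb i := by
  rw [mulsum₁]
  calc (d.sum fun q v => mul (v • Mb q) (Lb i))
      = d.sum fun q v => (v * (F q * α)) • Lb i :=
        Finsupp.sum_congr fun q _ => by
          rw [map_smul, LinearMap.smul_apply, hML, smul_smul]; congr 1; ring
    _ = (α * α) • Lb i := fsum_smul' _ _ _ _ (dsum_c hα α)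

lemma mul_M_C (hML : ∀ i j : ℤ, mul (Mb i) (Lb j) = (α * F i) • Lb j) (i : ℤ) :
    mul (Mb i) (c.sum fun p v => v • Lb p) = (α * F i) • c.sum fun p v => v • Lb p := by
  rw [mulsum₂, Finsupp.smul_sum]
  exact Finsupp.sum_congr fun p _ => by
    rw [map_smul, hML, smul_smul, smul_smul]; congr 1; ring

lemma mul_C_M (hLM : ∀ i j : ℤ, mul (Lb i) (Mb j) = (α * F j) • Lb i) (i : ℤ) :
    mul (c.sum fun p v => v • Lb p) (Mb i) = (α * F i) • c.sum fun p v => v • Lb p := by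
  rw [mulsum₁, Finsupp.smul_sum]
  exact Finsupp.sum_congr fun p _ => by
    rw [map_smul, LinearMap.smul_apply, hLM, smul_smul, smul_smul]; congr 1; ring

lemma mul_M_D (hα : α = d.sum fun q v => F q * v)
    (hMM : ∀ i j : ℤ, mul (Mb i) (Mb j) =
      (F i * F j) • ((c.sum fun p v => v • Lb p) + d.sum fun q v => v • Mb q)) (i : ℤ) :
    mul (Mb i) (d.sum fun q v => v • Mb q) =
      (α * F i) • ((c.sum fun p v => v • Lb p) + d.sum fun q v => v • Mb q) := by
  rw [mulsum₂]
  calc (d.sum fun q v => mul (Mb i) (v • Mb q))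
      = d.sum fun q v => (v * (F q * F i)) •
          ((c.sum fun p v => v • Lb p) + d.sum fun q v => v • Mb q) :=
        Finsupp.sum_congr fun q _ => by rw [map_smul, hMM, smul_smul]; congr 1; ring
    _ = _ := by rw [fsum_smul' _ _ (α * F i) _ (dsum_c hα (F i))]

lemma mul_D_M (hα : α = d.sum fun q v => F q * v)
    (hMM : ∀ i j : ℤ, mul (Mb i) (Mb j) =
      (F i * F j) • ((c.sum fun p v => v • Lb p) + d.sum fun q v => v • Mb q)) (i : ℤ) :
    mul (d.sum fun q v => v • Mb q) (Mb i) =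
      (α * F i) • ((c.sum fun p v => v • Lb p) + d.sum fun q v => v • Mb q) := by
  rw [mulsum₁]
  calc (d.sum fun q v => mul (v • Mb q) (Mb i))
      = d.sum fun q v => (v * (F q * F i)) •
          ((c.sum fun p v => v • Lb p) + d.sum fun q v => v • Mb q) :=
        Finsupp.sum_congr fun q _ => by
          rw [map_smul, LinearMap.smul_apply, hMM, smul_smul]
    _ = _ := by rw [fsum_smul' _ _ (α * F i) _ (dsum_c hα (F i))]

end main

section brS
variable {F : ℤ → ℂ} {k : ℤ} {d c : ℤ →₀ ℂ} {α : ℂ}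

-- generic zero lemmas
lemma brT_sumz₁ (t : ℤ →₀ ℂ) (g : ℤ → Afk) (x y : Afk) (h : ∀ i, brT F k (g i) x y = 0) :
    brT F k (t.sum fun i v => v • g i) x y = 0 := by
  rw [brTsum₁]
  exact fsum_zero' _ _ fun i v => by
    rw [map_smul, LinearMap.smul_apply, LinearMap.smul_apply, h, smul_zero]

lemma brT_sumz₂ (t : ℤ →₀ ℂ) (g : ℤ → Afk) (x y : Afk) (h : ∀ i, brT F k x (g i) y = 0) :
    brT F k x (t.sum fun i v => v • g i) y = 0 := by
  rw [brTsum₂]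
  exact fsum_zero' _ _ fun i v => by
    rw [map_smul, LinearMap.smul_apply, h, smul_zero]

lemma brT_sumz₃ (t : ℤ →₀ ℂ) (g : ℤ → Afk) (x y : Afk) (h : ∀ i, brT F k x y (g i) = 0) :
    brT F k x y (t.sum fun i v => v • g i) = 0 := by
  rw [brTsum₃]
  exact fsum_zero' _ _ fun i v => by rw [map_smul, h, smul_zero]

-- D collapse lemmas
lemma brT_D_LL (hα : α = d.sum fun q v => F q * v) (r s : ℤ) :
    brT F k (d.sum fun q v => v • Mb q) (Lb r) (Lb s) =
      (α * ((r - s : ℤ) : ℂ)) • Lb (r + s + k) := by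
  rw [brTsum₁]
  calc (d.sum fun q v => brT F k (v • Mb q) (Lb r) (Lb s))
      = d.sum fun q v => (v * (F q * ((r - s : ℤ) : ℂ))) • Lb (r + s + k) :=
        Finsupp.sum_congr fun q _ => by
          rw [map_smul, LinearMap.smul_apply, LinearMap.smul_apply, brT_MLL, smul_smul]
    _ = _ := fsum_smul' _ _ _ _ (dsum_c hα _)

lemma brT_L_D_L (hα : α = d.sum fun q v => F q * v) (r s : ℤ) :
    brT F k (Lb r) (d.sum fun q v => v • Mb q) (Lb s) =
      (α * ((s - r : ℤ) : ℂ)) • Lb (r + s + k) := by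
  rw [brTsum₂]
  calc (d.sum fun q v => brT F k (Lb r) (v • Mb q) (Lb s))
      = d.sum fun q v => (v * (F q * ((s - r : ℤ) : ℂ))) • Lb (r + s + k) :=
        Finsupp.sum_congr fun q _ => by
          rw [map_smul, LinearMap.smul_apply, brT_LML, smul_smul]
    _ = _ := fsum_smul' _ _ _ _ (dsum_c hα _)

lemma brT_LL_D (hα : α = d.sum fun q v => F q * v) (r s : ℤ) :
    brT F k (Lb r) (Lb s) (d.sum fun q v => v • Mb q) =
      (α * ((r - s : ℤ) : ℂ)) • Lb (r + s + k) := by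
  rw [brTsum₃]
  calc (d.sum fun q v => brT F k (Lb r) (Lb s) (v • Mb q))
      = d.sum fun q v => (v * (F q * ((r - s : ℤ) : ℂ))) • Lb (r + s + k) :=
        Finsupp.sum_congr fun q _ => by rw [map_smul, brT_LLM, smul_smul]
    _ = _ := fsum_smul' _ _ _ _ (dsum_c hα _)

-- C expansion lemmas
lemma brT_C_LM (s t : ℤ) :
    brT F k (c.sum fun p v => v • Lb p) (Lb s) (Mb t) =
      c.sum fun p v => (v * (F t * ((p - s : ℤ) : ℂ))) • Lb (p + s + k) := by
  rw [brTsum₁]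
  exact Finsupp.sum_congr fun p _ => by
    rw [map_smul, LinearMap.smul_apply, LinearMap.smul_apply, brT_LLM, smul_smul]

lemma brT_C_ML (s t : ℤ) :
    brT F k (c.sum fun p v => v • Lb p) (Mb s) (Lb t) =
      c.sum fun p v => (v * (F s * ((t - p : ℤ) : ℂ))) • Lb (p + t + k) := by
  rw [brTsum₁]
  exact Finsupp.sum_congr fun p _ => by
    rw [map_smul, LinearMap.smul_apply, LinearMap.smul_apply, brT_LML, smul_smul]

lemma brT_L_C_M (r t : ℤ) :
    brT F k (Lb r) (c.sum fun p v => v • Lb p) (Mb t) =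
      c.sum fun p v => (v * (F t * ((r - p : ℤ) : ℂ))) • Lb (r + p + k) := by
  rw [brTsum₂]
  exact Finsupp.sum_congr fun p _ => by
    rw [map_smul, LinearMap.smul_apply, brT_LLM, smul_smul]

lemma brT_M_C_L (r t : ℤ) :
    brT F k (Mb r) (c.sum fun p v => v • Lb p) (Lb t) =
      c.sum fun p v => (v * (F r * ((p - t : ℤ) : ℂ))) • Lb (p + t + k) := by
  rw [brTsum₂]
  exact Finsupp.sum_congr fun p _ => by
    rw [map_smul, LinearMap.smul_apply, brT_MLL, smul_smul]

lemma brT_LM_C (r s : ℤ) :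
    brT F k (Lb r) (Mb s) (c.sum fun p v => v • Lb p) =
      c.sum fun p v => (v * (F s * ((p - r : ℤ) : ℂ))) • Lb (r + p + k) := by
  rw [brTsum₃]
  exact Finsupp.sum_congr fun p _ => by rw [map_smul, brT_LML, smul_smul]

lemma brT_ML_C (r s : ℤ) :
    brT F k (Mb r) (Lb s) (c.sum fun p v => v • Lb p) =
      c.sum fun p v => (v * (F r * ((s - p : ℤ) : ℂ))) • Lb (p + s + k) := by
  rw [brTsum₃]
  refine Finsupp.sum_congr fun p _ => ?_
  rw [map_smul, brT_MLL, smul_smul, show s + p + k = p + s + k by ring]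

lemma cancel2 (t : ℤ →₀ ℂ) (A B : ℂ) (g h : ℤ → ℂ → ℂ) (w : ℤ → Afk)
    (hz : ∀ p v, A * g p v + B * h p v = 0) :
    A • (t.sum fun p v => g p v • w p) + B • (t.sum fun p v => h p v • w p) = 0 := by
  rw [Finsupp.smul_sum, Finsupp.smul_sum, ← fsum_add]
  exact fsum_zero' _ _ fun p v => by
    rw [smul_smul, smul_smul, ← add_smul, hz, zero_smul]

end brS

section mainB
variable {F : ℤ → ℂ} {k : ℤ} {d c : ℤ →₀ ℂ} {α : ℂ} {mul : Afk →ₗ[ℂ] Afk →ₗ[ℂ] Afk}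

lemma commB
    (hLL : ∀ i j : ℤ, mul (Lb i) (Lb j) = 0)
    (hLM : ∀ i j : ℤ, mul (Lb i) (Mb j) = (α * F j) • Lb i)
    (hML : ∀ i j : ℤ, mul (Mb i) (Lb j) = (α * F i) • Lb j)
    (hMM : ∀ i j : ℤ, mul (Mb i) (Mb j) =
      (F i * F j) • ((c.sum fun p v => v • Lb p) + d.sum fun q v => v • Mb q)) :
    ∀ a b : Bool × ℤ, mul (Bb a) (Bb b) = mul (Bb b) (Bb a) := by
  rintro ⟨ua, i⟩ ⟨ub, j⟩
  cases ua <;> cases ub <;> simp [hLL, hLM, hML, hMM, mul_comm]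

lemma assocB (hα : α = d.sum fun q v => F q * v)
    (hLL : ∀ i j : ℤ, mul (Lb i) (Lb j) = 0)
    (hLM : ∀ i j : ℤ, mul (Lb i) (Mb j) = (α * F j) • Lb i)
    (hML : ∀ i j : ℤ, mul (Mb i) (Lb j) = (α * F i) • Lb j)
    (hMM : ∀ i j : ℤ, mul (Mb i) (Mb j) =
      (F i * F j) • ((c.sum fun p v => v • Lb p) + d.sum fun q v => v • Mb q)) :
    ∀ a b e : Bool × ℤ, mul (mul (Bb a) (Bb b)) (Bb e) = mul (Bb a) (mul (Bb b) (Bb e)) := by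
  rintro ⟨ua, i⟩ ⟨ub, j⟩ ⟨uc, t⟩
  cases ua <;> cases ub <;> cases uc <;>
    simp only [Bb_f, Bb_t, hLL, hLM, hML, hMM, map_smul, LinearMap.smul_apply, map_zero,
      LinearMap.zero_apply, smul_zero, zero_smul, map_add, LinearMap.add_apply,
      mul_L_C hLL, mul_C_L hLL, mul_L_D hα hLM, mul_D_L hα hML, mul_M_C hML, mul_C_M hLM,
      mul_M_D hα hMM, mul_D_M hα hMM] <;>
    first
      | rfl
      | module

end mainB

section zeroes
variable {F : ℤ → ℂ} {k : ℤ} {d c : ℤ →₀ ℂ}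

lemma zCLL (s t : ℤ) : brT F k (c.sum fun p v => v • Lb p) (Lb s) (Lb t) = 0 :=
  brT_sumz₁ _ _ _ _ fun p => by simp
lemma zLCL (s t : ℤ) : brT F k (Lb s) (c.sum fun p v => v • Lb p) (Lb t) = 0 :=
  brT_sumz₂ _ _ _ _ fun p => by simp
lemma zLLC (s t : ℤ) : brT F k (Lb s) (Lb t) (c.sum fun p v => v • Lb p) = 0 :=
  brT_sumz₃ _ _ _ _ fun p => by simp
lemma zCMM (s t : ℤ) : brT F k (c.sum fun p v => v • Lb p) (Mb s) (Mb t) = 0 :=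
  brT_sumz₁ _ _ _ _ fun p => by simp
lemma zMCM (s t : ℤ) : brT F k (Mb s) (c.sum fun p v => v • Lb p) (Mb t) = 0 :=
  brT_sumz₂ _ _ _ _ fun p => by simp
lemma zMMC (s t : ℤ) : brT F k (Mb s) (Mb t) (c.sum fun p v => v • Lb p) = 0 :=
  brT_sumz₃ _ _ _ _ fun p => by simp
lemma zDLM (s t : ℤ) : brT F k (d.sum fun q v => v • Mb q) (Lb s) (Mb t) = 0 :=
  brT_sumz₁ _ _ _ _ fun q => by simp
lemma zDML (s t : ℤ) : brT F k (d.sum fun q v => v • Mb q) (Mb s) (Lb t) = 0 :=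
  brT_sumz₁ _ _ _ _ fun q => by simp
lemma zDMM (s t : ℤ) : brT F k (d.sum fun q v => v • Mb q) (Mb s) (Mb t) = 0 :=
  brT_sumz₁ _ _ _ _ fun q => by simp
lemma zLDM (s t : ℤ) : brT F k (Lb s) (d.sum fun q v => v • Mb q) (Mb t) = 0 :=
  brT_sumz₂ _ _ _ _ fun q => by simp
lemma zMDL (s t : ℤ) : brT F k (Mb s) (d.sum fun q v => v • Mb q) (Lb t) = 0 :=
  brT_sumz₂ _ _ _ _ fun q => by simp
lemma zMDM (s t : ℤ) : brT F k (Mb s) (d.sum fun q v => v • Mb q) (Mb t) = 0 :=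
  brT_sumz₂ _ _ _ _ fun q => by simp
lemma zLMD (s t : ℤ) : brT F k (Lb s) (Mb t) (d.sum fun q v => v • Mb q) = 0 :=
  brT_sumz₃ _ _ _ _ fun q => by simp
lemma zMLD (s t : ℤ) : brT F k (Mb s) (Lb t) (d.sum fun q v => v • Mb q) = 0 :=
  brT_sumz₃ _ _ _ _ fun q => by simp
lemma zMMD (s t : ℤ) : brT F k (Mb s) (Mb t) (d.sum fun q v => v • Mb q) = 0 :=
  brT_sumz₃ _ _ _ _ fun q => by simp

end zeroes

section leib
variable {F : ℤ → ℂ} {k : ℤ} {d c : ℤ →₀ ℂ} {α : ℂ} {mul : Afk →ₗ[ℂ] Afk →ₗ[ℂ] Afk}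

lemma leibB (hα : α = d.sum fun q v => F q * v)
    (hLL : ∀ i j : ℤ, mul (Lb i) (Lb j) = 0)
    (hLM : ∀ i j : ℤ, mul (Lb i) (Mb j) = (α * F j) • Lb i)
    (hML : ∀ i j : ℤ, mul (Mb i) (Lb j) = (α * F i) • Lb j)
    (hMM : ∀ i j : ℤ, mul (Mb i) (Mb j) =
      (F i * F j) • ((c.sum fun p v => v • Lb p) + d.sum fun q v => v • Mb q)) :
    ∀ a b e f : Bool × ℤ, (3 : ℂ) • mul (Bb a) (brT F k (Bb b) (Bb e) (Bb f)) =
      brT F k (mul (Bb a) (Bb b)) (Bb e) (Bb f) + brT F k (Bb b) (mul (Bb a) (Bb e)) (Bb f) +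
      brT F k (Bb b) (Bb e) (mul (Bb a) (Bb f)) := by
  rintro ⟨ua, u⟩ ⟨ub, r⟩ ⟨uc, s⟩ ⟨ue, t⟩
  cases ua <;> cases ub <;> cases uc <;> cases ue <;>
    simp only [Bb_f, Bb_t, brT_LLL, brT_LLM, brT_LML, brT_MLL, brT_LMM, brT_MLM, brT_MML,
      brT_MMM, hLL, hLM, hML, hMM, map_smul, LinearMap.smul_apply, map_zero,
      LinearMap.zero_apply, smul_zero, zero_smul, zero_add, add_zero, map_add,
      LinearMap.add_apply, smul_add,
      brT_D_LL hα, brT_L_D_L hα, brT_LL_D hα,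
      brT_C_LM, brT_C_ML, brT_L_C_M, brT_M_C_L, brT_LM_C, brT_ML_C,
      zCLL, zLCL, zLLC, zCMM, zMCM, zMMC, zDLM, zDML, zDMM, zLDM, zMDL, zMDM, zLMD,
      zMLD, zMMD, smul_smul] <;>
    first
      | rfl
      | (match_scalars <;> (push_cast; ring1))
      | (rw [show s + u + k = u + s + k from by ring]; match_scalars <;> (push_cast; ring1))
      | (symm; refine cancel2 c _ _ _ _ _ ?_; intro p v; push_cast; ring1)

end leib

/-- Setting `d_{i,j,p} = d_p f(M_i) f(M_j)` and `α = ∑_q f(M_q) d_q`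
for a finitely supported family `(d_i)`, the coefficient conditions hold, and the
resulting multiplication defines a transposed Poisson structure on `A_{f,k}` for any
finitely supported `(c_p)`. -/
theorem Afk_example_transposed_poisson (F : ℤ → ℂ) (hF : ∃ t, F t ≠ 0) (k : ℤ)
    (d : ℤ →₀ ℂ) (c : ℤ →₀ ℂ) (α : ℂ)
    (hα : α = d.sum fun q v => F q * v)
    (mul : Afk →ₗ[ℂ] Afk →ₗ[ℂ] Afk)
    (hLL : ∀ i j : ℤ, mul (Lb i) (Lb j) = 0)
    (hLM : ∀ i j : ℤ, mul (Lb i) (Mb j) = (α * F j) • Lb i)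
    (hML : ∀ i j : ℤ, mul (Mb i) (Lb j) = (α * F i) • Lb j)
    (hMM : ∀ i j : ℤ, mul (Mb i) (Mb j) =
      (F i * F j) • ((c.sum fun p v => v • Lb p) + d.sum fun q v => v • Mb q)) :
    (∀ i j p : ℤ, d p * F i * F j = d p * F j * F i) ∧
    (∀ i j : ℤ, (d.sum fun q v => F q * (v * F i * F j)) = α * F i * F j) ∧
    (∀ r s t p : ℤ,
      (d.sum fun q v => (v * F r * F s) * (d p * F q * F t)) =
      (d.sum fun q v => (v * F s * F t) * (d p * F q * F r))) ∧
    (∀ x y : Afk, mul x y = mul y x) ∧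
    (∀ x y z : Afk, mul (mul x y) z = mul x (mul y z)) ∧
    (∀ u x y z : Afk, (3 : ℂ) • mul u (br F k x y z) =
      br F k (mul u x) y z + br F k x (mul u y) z + br F k x y (mul u z)) := by
  refine ⟨fun i j p => by ring, ?_, ?_, ?_, ?_, ?_⟩
  · intro i j
    rw [hα, Finsupp.sum_mul, Finsupp.sum_mul]
    exact Finsupp.sum_congr fun q _ => by ring
  · intro r s t p
    exact Finsupp.sum_congr fun q _ => by ring
  · exact comm_of_basis mul (commB hLL hLM hML hMM)
  · exact assoc_of_basis mul (assocB hα hLL hLM hML hMM)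
  · intro u x y z
    simp only [br_eq]
    exact leib_of_basis F k mul (leibB hα hLL hLM hML hMM) u x y z
end
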